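/- arXiv:2003.04111 — 4 statements merged into one kernel-verified Lean document; each statement's English description precedes it below -/
import Mathlib

section
/- Let W_Γ be a Coxeter group. If there exist two non-adjacent even vertices v, w ∈ V, then the automorphism group Aut(W_Γ) virtually surjects onto the free product ℤ/2 * ℤ/2 (the infinite dihedral group). -/
open Function Subgroup

namespace CoxeterMatrix

variable {V : Type*}

/-- Two vertices of a Coxeter graph are adjacent iff they are distinct and their Coxeter
matrix entry is nonzero (an entry `0` encodes `∞`, i.e. non-adjacency; entries `≥ 2`
are the edge labels). -/
def Adj (M : CoxeterMatrix V) (v w : V) : Prop := v ≠ w ∧ M v w ≠ 0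

/-- A clique of the Coxeter graph: a set of pairwise adjacent vertices. -/
def IsClique (M : CoxeterMatrix V) (S : Set V) : Prop := S.Pairwise M.Adj

/-- A maximal clique: a clique not properly contained in any other clique. -/
def IsMaxClique (M : CoxeterMatrix V) (S : Set V) : Prop :=
  M.IsClique S ∧ ∀ T, M.IsClique T → S ⊆ T → S = T

/-- The special subgroup `W_S` of the Coxeter group generated by the
simple reflections indexed by `S`. -/
def sp (M : CoxeterMatrix V) (S : Set V) : Subgroup M.Group :=
  Subgroup.closure (M.simple '' S)

/-- A vertex is even if every edge containing it has even label. -/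
def EvenVertex (M : CoxeterMatrix V) (v : V) : Prop :=
  ∀ w, M.Adj v w → Even (M v w)

end CoxeterMatrix

/-- `G` virtually surjects onto `Q` iff some finite-index subgroup of `G`
admits a surjective group homomorphism onto `Q`. -/
def VirtuallySurjectsOnto (G Q : Type*) [Group G] [Group Q] : Prop :=
  ∃ H : Subgroup G, H.FiniteIndex ∧ ∃ φ : H →* Q, Function.Surjective φ

/-- The free product `ℤ/2 * ℤ/2` (the infinite dihedral group). -/
abbrev Z2Z2 := Monoid.Coprod (Multiplicative (ZMod 2)) (Multiplicative (ZMod 2))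

/-!
Sending `s_v ↦ sr 0`, `s_w ↦ sr 1` and every other generator to `1` defines a surjection
`π : W → D∞` (this is where evenness and non-adjacency of `v`, `w` enter). Let `H ≤ Aut W` be the
kernel of the action on the finite set `Hom(W, ℤ/2 × ℤ/2)`; it has finite index and contains the
inner automorphisms. For `α ∈ H`, `π ∘ α` agrees with `π` after reduction mod 2
(`D₂ ≅ ℤ/2 × ℤ/2`), so it kills the other generators and sends `s_v`, `s_w` to reflections
`sr p`, `sr q` with `p` even that still generate `D∞`; hence `q = p ± 1`, and the pair is
conjugate to `(sr 0, sr 1)`. So `π ∘ α = c_d ∘ π`, with `d` unique because `D∞` is centreless,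
and `α ↦ d` is a surjection `H → D∞ ≅ ℤ/2 ∗ ℤ/2`.
-/

theorem zpow_mul_of_mul_self {G : Type*} [Group G] {a b : G} (ha : a * a = 1)
    (hb : b * b = 1) (i : ℤ) : (a * b) ^ i * a = a * (a * b) ^ (-i) := by
  have h : SemiconjBy a (a * b) (a * b)⁻¹ := by
    rw [SemiconjBy, mul_inv_rev, inv_eq_of_mul_eq_one_right ha, inv_eq_of_mul_eq_one_right hb,
      ← mul_assoc, ha, one_mul, mul_assoc, ha, mul_one]
  rw [(h.zpow_right (-i)).eq, inv_zpow', neg_neg]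

namespace DihedralGroup

variable {m n : ℕ}

def map (f : ZMod m →+ ZMod n) : DihedralGroup m →* DihedralGroup n where
  toFun
    | r i => r (f i)
    | sr i => sr (f i)
  map_one' := congrArg r f.map_zero
  map_mul' := by rintro (i | i) (j | j) <;> simp [map_add, map_sub]

@[simp]
theorem map_r (f : ZMod m →+ ZMod n) (i : ZMod m) : map f (r i) = r (f i) := rfl

@[simp]
theorem map_sr (f : ZMod m →+ ZMod n) (i : ZMod m) : map f (sr i) = sr (f i) := rfl

theorem map_surjective {f : ZMod m →+ ZMod n} (hf : Surjective f) : Surjective (map f) := by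
  rintro (i | i) <;> obtain ⟨j, rfl⟩ := hf i
  exacts [⟨r j, rfl⟩, ⟨sr j, rfl⟩]

theorem closure_sr_zero_sr_one : closure {(sr 0 : DihedralGroup n), sr 1} = ⊤ := by
  have h0 : sr 0 ∈ closure {(sr 0 : DihedralGroup n), sr 1} := subset_closure (by simp)
  have h1 : sr 1 ∈ closure {(sr 0 : DihedralGroup n), sr 1} := subset_closure (by simp)
  have hr : ∀ i : ZMod n, r i ∈ closure {(sr 0 : DihedralGroup n), sr 1} := fun i => by
    obtain ⟨k, rfl⟩ := ZMod.intCast_surjective i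
    rw [← r_one_zpow, show r 1 = sr 0 * sr (1 : ZMod n) by simp [sr_mul_sr]]
    exact zpow_mem (mul_mem h0 h1) k
  refine eq_top_iff.2 fun x _ => ?_
  rcases x with i | i
  · exact hr i
  · simpa [sr_mul_r] using mul_mem h0 (hr i)

/-- Since `ZMod 0` is definitionally `ℤ`, `r i` with `i : ℤ` elaborates without any cast, to a
term that `simp` cannot handle; hence the explicit `Int.cast`. -/
@[elab_as_elim]
theorem cases_zero {P : DihedralGroup 0 → Prop} (x : DihedralGroup 0)
    (hr : ∀ i : ℤ, P (r (Int.cast i))) (hsr : ∀ i : ℤ, P (sr (Int.cast i))) : P x := by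
  rcases x with i | i <;> obtain ⟨i, rfl⟩ := ZMod.intCast_surjective i
  exacts [hr i, hsr i]

theorem center_eq_bot_zero : center (DihedralGroup 0) = ⊥ := by
  refine (eq_bot_iff_forall _).2 fun x hx => ?_
  induction x using cases_zero with
  | hr i =>
    have h := mem_center_iff.1 hx (sr 0)
    simp only [r_mul_sr, sr_mul_r, sr.injEq, zero_add, zero_sub] at h
    have hi : i = -i := by exact_mod_cast h
    rw [show i = 0 by omega, Int.cast_zero, r_zero]
  | hsr i =>
    have h := mem_center_iff.1 hx (r 1)
    simp only [r_mul_sr, sr_mul_r, sr.injEq] at h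
    have hi : i - 1 = i + 1 := by exact_mod_cast h
    omega

def reduceMod (k : ℕ) : DihedralGroup 0 →* DihedralGroup k :=
  map (ZMod.castHom (dvd_zero k) (ZMod k)).toAddMonoidHom

@[simp]
theorem reduceMod_r (k : ℕ) (i : ℤ) : reduceMod k (r (Int.cast i)) = r (Int.cast i) := by
  simp [reduceMod]

@[simp]
theorem reduceMod_sr (k : ℕ) (i : ℤ) : reduceMod k (sr (Int.cast i)) = sr (Int.cast i) := by
  simp [reduceMod]

theorem reduceMod_surjective (k : ℕ) : Surjective (reduceMod k) :=
  map_surjective (ZMod.ringHom_surjective _)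

/-- Two reflections `sr p`, `sr q` generating `D∞` must be adjacent: modulo `k = |q - p|` they
coincide, so they would make `DihedralGroup k` cyclic. -/
theorem natAbs_sub_eq_one_of_closure_eq_top {p q : ℤ}
    (h : closure {(sr (Int.cast p) : DihedralGroup 0), sr (Int.cast q)} = ⊤) :
    (q - p).natAbs = 1 := by
  set k := (q - p).natAbs
  have hpq : (p : ZMod k) = q :=
    (ZMod.intCast_eq_intCast_iff_dvd_sub _ _ _).2 (Int.natAbs_dvd.2 dvd_rfl)
  refine isCyclic_iff.1 <| isCyclic_iff_exists_zpowers_eq_top.2 ⟨sr p, ?_⟩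
  rw [zpowers_eq_closure, ← MonoidHom.range_eq_top.2 (reduceMod_surjective k),
    MonoidHom.range_eq_map, ← h, MonoidHom.map_closure, Set.image_pair, reduceMod_sr,
    reduceMod_sr, ← hpq, Set.pair_eq_singleton]

theorem eq_one_of_mul_self_of_reduceMod {x : DihedralGroup 0} (hx : x * x = 1)
    (h : reduceMod 2 x = 1) : x = 1 := by
  induction x using cases_zero with
  | hr i =>
    rw [r_mul_r, one_def, r.injEq] at hx
    have hi : i + i = 0 := by exact_mod_cast hx
    rw [show i = 0 by omega, Int.cast_zero, r_zero]
  | hsr i =>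
    rw [reduceMod_sr, one_def] at h
    cases h

theorem exists_conj_of_closure_eq_top {x y : DihedralGroup 0} (hx : reduceMod 2 x = sr 0)
    (hy : reduceMod 2 y = sr 1) (h : closure {x, y} = ⊤) :
    ∃ d, d * sr 0 * d⁻¹ = x ∧ d * sr 1 * d⁻¹ = y := by
  induction x using cases_zero with
  | hr i => rw [reduceMod_r] at hx; cases hx
  | hsr p =>
  induction y using cases_zero with
  | hr j => rw [reduceMod_r] at hy; cases hy
  | hsr q =>
  rw [reduceMod_sr, sr.injEq, ZMod.intCast_zmod_eq_zero_iff_dvd] at hx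
  obtain ⟨a, rfl⟩ := hx
  rcases Int.natAbs_eq_iff.1 (natAbs_sub_eq_one_of_closure_eq_top h) with hq | hq
  · obtain rfl : q = 2 * a + 1 := by omega
    refine ⟨r (Int.cast (-a)), ?_, ?_⟩ <;>
      simp only [r_mul_sr, sr_mul_r, inv_r, sr.injEq] <;> push_cast <;> ring
  · obtain rfl : q = 2 * a - 1 := by omega
    refine ⟨sr (Int.cast a), ?_, ?_⟩ <;>
      simp only [sr_mul_sr, r_mul_sr, inv_sr, sr.injEq] <;> push_cast <;> ring

section liftZero

variable {G : Type*} [Group G] (a b : G)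

def liftZeroFun : DihedralGroup 0 → G
  | r i => (a * b) ^ (ZMod.cast i : ℤ)
  | sr i => a * (a * b) ^ (ZMod.cast i : ℤ)

@[simp]
theorem liftZeroFun_r (i : ℤ) : liftZeroFun a b (r (Int.cast i)) = (a * b) ^ i := by
  simp [liftZeroFun]

@[simp]
theorem liftZeroFun_sr (i : ℤ) : liftZeroFun a b (sr (Int.cast i)) = a * (a * b) ^ i := by
  simp [liftZeroFun]

def liftZero (ha : a * a = 1) (hb : b * b = 1) : DihedralGroup 0 →* G where
  toFun := liftZeroFun a b
  map_one' := by simpa using liftZeroFun_r a b 0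
  map_mul' x y := by
    induction x using cases_zero <;> induction y using cases_zero <;>
      simp only [r_mul_r, r_mul_sr, sr_mul_r, sr_mul_sr, ← Int.cast_add, ← Int.cast_sub,
        liftZeroFun_r, liftZeroFun_sr]
    · rw [zpow_add]
    · rw [← mul_assoc, zpow_mul_of_mul_self ha hb, mul_assoc, ← zpow_add, sub_eq_neg_add]
    · rw [zpow_add, mul_assoc]
    · rw [mul_assoc a, ← mul_assoc ((a * b) ^ _) a, zpow_mul_of_mul_self ha hb, ← mul_assoc,
        ← mul_assoc, ha, one_mul, ← zpow_add, sub_eq_neg_add]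

theorem liftZero_sr_zero (ha : a * a = 1) (hb : b * b = 1) : liftZero a b ha hb (sr 0) = a := by
  change liftZeroFun a b (sr 0) = a
  simpa using liftZeroFun_sr a b 0

theorem liftZero_sr_one (ha : a * a = 1) (hb : b * b = 1) : liftZero a b ha hb (sr 1) = b := by
  change liftZeroFun a b (sr 1) = b
  simpa [← mul_assoc, ha] using liftZeroFun_sr a b 1

end liftZero

end DihedralGroup

open DihedralGroup in
theorem exists_surjective_dihedralGroup_zero_Z2Z2 :
    ∃ f : DihedralGroup 0 →* Z2Z2, Surjective f := by
  have hg : Multiplicative.ofAdd (1 : ZMod 2) * Multiplicative.ofAdd 1 = 1 := rfl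
  have hC2 : ∀ c : Multiplicative (ZMod 2), c = 1 ∨ c = Multiplicative.ofAdd 1 := by decide
  have hinl : Monoid.Coprod.inl (Multiplicative.ofAdd (1 : ZMod 2)) *
      Monoid.Coprod.inl (Multiplicative.ofAdd 1) = (1 : Z2Z2) := by rw [← map_mul, hg, map_one]
  have hinr : Monoid.Coprod.inr (Multiplicative.ofAdd (1 : ZMod 2)) *
      Monoid.Coprod.inr (Multiplicative.ofAdd 1) = (1 : Z2Z2) := by rw [← map_mul, hg, map_one]
  refine ⟨liftZero _ _ hinl hinr, ?_⟩
  rw [← MonoidHom.range_eq_top, eq_top_iff, ← Monoid.Coprod.range_inl_sup_range_inr, sup_le_iff]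
  constructor <;> rintro _ ⟨c, rfl⟩ <;> rcases hC2 c with rfl | rfl
  · simp
  · exact ⟨sr 0, liftZero_sr_zero ..⟩
  · simp
  · exact ⟨sr 1, liftZero_sr_one ..⟩

namespace MulAut

variable (G A : Type*) [Group G] [Group A]

def precompPerm : MulAut G →* Equiv.Perm (G →* A) where
  toFun α := α.monoidHomCongrLeftEquiv
  map_one' := rfl
  map_mul' _ _ := rfl

variable {G A}

@[simp]
theorem precompPerm_apply (α : MulAut G) (χ : G →* A) :
    precompPerm G A α χ = χ.comp α.symm.toMonoidHom := rfl

theorem apply_eq_of_mem_ker_precompPerm {α : MulAut G} (hα : α ∈ (precompPerm G A).ker)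
    (χ : G →* A) (x : G) : χ (α x) = χ x := by
  have h := DFunLike.congr_fun (Equiv.congr_fun (MonoidHom.mem_ker.1 hα) χ) (α x)
  simpa using h.symm

theorem conj_mem_ker_precompPerm [IsMulCommutative A] (g : G) :
    conj g ∈ (precompPerm G A).ker :=
  MonoidHom.mem_ker.2 <| Equiv.ext fun χ => MonoidHom.ext fun x => by
    simp [mul_comm' (χ g)⁻¹]

theorem eq_of_forall_mul_mul_inv_eq {D : Type*} [Group D] {π : G →* D} (hπ : Surjective π)
    (hD : center D = ⊥) {d d' : D} (h : ∀ x, d * π x * d⁻¹ = d' * π x * d'⁻¹) : d = d' := by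
  have hc : d'⁻¹ * d ∈ center D := mem_center_iff.2 fun z => by
    obtain ⟨x, rfl⟩ := hπ z
    calc π x * (d'⁻¹ * d) = d'⁻¹ * (d' * π x * d'⁻¹) * d := by group
      _ = d'⁻¹ * d * π x := by rw [← h x]; group
  rw [hD, mem_bot, inv_mul_eq_one] at hc
  exact hc.symm

theorem exists_surjective_of_forall_exists_conj {D : Type*} [Group D] {π : G →* D}
    (hπ : Surjective π) (hD : center D = ⊥) {H : Subgroup (MulAut G)}
    (hconj : ∀ α ∈ H, ∃ d : D, ∀ x, π (α x) = d * π x * d⁻¹) (hinn : ∀ g, conj g ∈ H) :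
    ∃ φ : H →* D, Surjective φ := by
  choose d hd using hconj
  let φ : H →* D := MonoidHom.mk' (fun α => d α α.2) fun α β =>
    eq_of_forall_mul_mul_inv_eq hπ hD fun x => by
      rw [← hd, Subgroup.coe_mul, MulAut.mul_apply, hd _ α.2, hd _ β.2]
      group
  refine ⟨φ, fun z => ?_⟩
  obtain ⟨g, rfl⟩ := hπ z
  refine ⟨⟨conj g, hinn g⟩, eq_of_forall_mul_mul_inv_eq hπ hD fun x => ?_⟩
  change d _ (hinn g) * π x * (d _ (hinn g))⁻¹ = _
  rw [← hd]
  simp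

end MulAut

namespace CoxeterMatrix

open DihedralGroup

variable {V : Type*} (M : CoxeterMatrix V)

theorem finite_monoidHom [Finite V] (A : Type*) [Group A] [Finite A] : Finite (M.Group →* A) :=
  Finite.of_injective (fun χ => χ ∘ M.simple) fun _ _ h =>
    M.toCoxeterSystem.ext_simple (congrFun h)

theorem isLiftable_of_pairwise {G : Type*} [Monoid G] {S : Set V} {f : V → G}
    (hS : S.Pairwise fun u u' => M u u' = 0) (heven : ∀ u ∈ S, M.EvenVertex u)
    (hf : ∀ u ∉ S, f u = 1) (hsq : ∀ u, f u * f u = 1) : M.IsLiftable f := by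
  have hpow : ∀ u ∈ S, ∀ u' ∉ S, f u ^ M u u' = 1 := fun u hu u' hu' => by
    by_cases h0 : M u u' = 0
    · rw [h0, pow_zero]
    obtain ⟨k, hk⟩ := heven u hu u' ⟨fun h => hu' (h ▸ hu), h0⟩
    rw [hk, ← two_mul, pow_mul, sq, hsq, one_pow]
  intro u u'
  by_cases hu : u ∈ S <;> by_cases hu' : u' ∈ S
  · by_cases huu : u = u'
    · rw [huu, M.diagonal, pow_one, hsq]
    · rw [hS hu hu' huu, pow_zero]
  · rw [hf u' hu', mul_one]
    exact hpow u hu u' hu'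
  · rw [hf u hu, one_mul, M.symmetric]
    exact hpow u' hu' u hu
  · rw [hf u hu, hf u' hu', mul_one, one_pow]

theorem exists_surjective_dihedralGroup {v w : V} (hnadj : M v w = 0) (hv : M.EvenVertex v)
    (hw : M.EvenVertex w) :
    ∃ π : M.Group →* DihedralGroup 0, Surjective π ∧ π (M.simple v) = sr 0 ∧
      π (M.simple w) = sr 1 ∧ ∀ u, u ≠ v → u ≠ w → π (M.simple u) = 1 := by
  classical
  have hvw : v ≠ w := by
    rintro rfl
    simp at hnadj
  let f : V → DihedralGroup 0 := fun u => if u = v then sr 0 else if u = w then sr 1 else 1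
  have hf : M.IsLiftable f := by
    refine M.isLiftable_of_pairwise (S := {v, w})
      (Set.pairwise_pair.2 fun _ => ⟨hnadj, M.symmetric w v ▸ hnadj⟩)
      (by rintro u (rfl | rfl) <;> assumption) (fun u hu => ?_) fun u => ?_
    · simp only [Set.mem_insert_iff, Set.mem_singleton_iff, not_or] at hu
      simp [f, hu.1, hu.2]
    · simp only [f]
      split_ifs <;> simp
  let π := M.toCoxeterSystem.lift ⟨f, hf⟩
  have hπ (u : V) : π (M.simple u) = f u := M.toCoxeterSystem.lift_apply_simple hf u
  refine ⟨π, ?_, by simp [hπ, f], by simp [hπ, f, hvw.symm],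
    fun u hv hw => by simp [hπ, f, hv, hw]⟩
  rw [← MonoidHom.range_eq_top, eq_top_iff, ← closure_sr_zero_sr_one, closure_le]
  rintro _ (rfl | rfl)
  · exact ⟨M.simple v, by simp [hπ, f]⟩
  · exact ⟨M.simple w, by simp [hπ, f, hvw.symm]⟩

theorem closure_pair_eq_top_of_surjective {G : Type*} [Group G] {q : M.Group →* G}
    (hq : Surjective q) {v w : V} (h1 : ∀ u, u ≠ v → u ≠ w → q (M.simple u) = 1) :
    closure {q (M.simple v), q (M.simple w)} = ⊤ := by
  rw [eq_top_iff, ← MonoidHom.range_eq_top.2 hq, MonoidHom.range_eq_map,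
    ← M.toCoxeterSystem.subgroup_closure_range_simple, MonoidHom.map_closure, closure_le]
  rintro _ ⟨_, ⟨u, rfl⟩, rfl⟩
  by_cases hv : u = v
  · exact subset_closure (by simp [hv])
  by_cases hw : u = w
  · exact subset_closure (by simp [hw])
  rw [SetLike.mem_coe, toCoxeterSystem_simple, h1 u hv hw]
  exact one_mem _

theorem exists_conj_of_mem_ker {π : M.Group →* DihedralGroup 0} (hπ : Surjective π) {v w : V}
    (hv : π (M.simple v) = sr 0) (hw : π (M.simple w) = sr 1)
    (h1 : ∀ u, u ≠ v → u ≠ w → π (M.simple u) = 1) {α : MulAut M.Group}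
    (hα : α ∈ (MulAut.precompPerm M.Group (DihedralGroup 2)).ker) :
    ∃ d, ∀ x, π (α x) = d * π x * d⁻¹ := by
  let q := π.comp α.toMonoidHom
  have hred (x : M.Group) : reduceMod 2 (q x) = reduceMod 2 (π x) :=
    MulAut.apply_eq_of_mem_ker_precompPerm hα ((reduceMod 2).comp π) x
  have hq1 (u : V) (huv : u ≠ v) (huw : u ≠ w) : q (M.simple u) = 1 := by
    refine eq_one_of_mul_self_of_reduceMod ?_ (by rw [hred, h1 u huv huw, map_one])
    rw [← map_mul, ← toCoxeterSystem_simple, CoxeterSystem.simple_mul_simple_self, map_one]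
  have hgen := M.closure_pair_eq_top_of_surjective (q := q) (hπ.comp α.surjective) hq1
  obtain ⟨d, hdv, hdw⟩ := exists_conj_of_closure_eq_top
    (by rw [hred, hv]; simp [reduceMod]) (by rw [hred, hw]; simp [reduceMod]) hgen
  have hq : q = (MulAut.conj d).toMonoidHom.comp π := M.toCoxeterSystem.ext_simple fun u => by
    rw [toCoxeterSystem_simple]
    by_cases huv : u = v
    · subst huv
      simp [hv, hdv]
    by_cases huw : u = w
    · subst huw
      simp [hw, hdw]
    simp [hq1 u huv huw, h1 u huv huw]
  exact ⟨d, fun x => DFunLike.congr_fun hq x⟩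

end CoxeterMatrix

theorem stmt1_general {V : Type*} [Fintype V] (M : CoxeterMatrix V)
    (v w : V) (hnadj : M v w = 0)
    (hv : M.EvenVertex v) (hw : M.EvenVertex w) :
    VirtuallySurjectsOnto (MulAut M.Group) Z2Z2 := by
  obtain ⟨π, hπ, hπv, hπw, hπ1⟩ := M.exists_surjective_dihedralGroup hnadj hv hw
  have := IsKleinFour.isMulCommutative (G := DihedralGroup 2)
  have := M.finite_monoidHom (DihedralGroup 2)
  obtain ⟨φ, hφ⟩ := MulAut.exists_surjective_of_forall_exists_conj hπ
    DihedralGroup.center_eq_bot_zero (fun _ => M.exists_conj_of_mem_ker hπ hπv hπw hπ1)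
    MulAut.conj_mem_ker_precompPerm
  obtain ⟨ψ, hψ⟩ := exists_surjective_dihedralGroup_zero_Z2Z2
  exact ⟨_, inferInstance, ψ.comp φ, hψ.comp hφ⟩

theorem stmt1 {V : Type*} [Fintype V] (M : CoxeterMatrix V)
    (v w : V) (hvw : v ≠ w) (hnadj : M v w = 0)
    (hv : M.EvenVertex v) (hw : M.EvenVertex w) :
    VirtuallySurjectsOnto (MulAut M.Group) Z2Z2 :=
  stmt1_general M v w hnadj hv hw
end

section
/- Let W_Γ be a Coxeter group and let Δ be a maximal clique of Γ. Then the normalizer of the special subgroup W_Δ in W_Γ equals W_Δ itself; in particular, the centralizer of W_Δ in W_Γ equals the center Z(W_Δ) of W_Δ. -/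
open Function Subgroup

/-!
Let `h` normalize `W_Δ` with `h` of minimal length in its double coset `W_Δ h W_Δ`; it suffices to
show `h = 1`. Otherwise `h` has a right descent `v`, which lies outside `Δ` by minimality, so
maximality of `Δ` gives `t ∈ Δ` with `m(v, t) = ∞`. Lengths add on `W_Δ h`, hence `h s_t h⁻¹ ∈ W_Δ`
has length one: `h s_t = s_{t'} h` and `ℓ(h s_t) > ℓ(h)`. By the cocycle identity for right
inversions, conjugation by `s_t` then preserves the right inversions of `h`, so with `s_v` also
`s_t s_v s_t` is one. Writing `h = m e` with `m` minimal in `h W_{v,t}` transfers this inversion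
and `ℓ(h s_t) > ℓ(h)` to `e` in the infinite dihedral group `W_{v,t}`, where an element without
right descent `t` has only the inversions `(s_v s_t)^k s_v`, `k ≥ 0`. That `s_v s_t` has infinite order comes from Tits'
geometric representation.
-/

theorem ZMod.eq_zero_of_ne_one {a : ZMod 2} (h : a ≠ 1) : a = 0 := by
  revert a
  decide

namespace CoxeterSystem

variable {B W : Type*} [Group W] {M : CoxeterMatrix B} (cs : CoxeterSystem M W)

section InversionParity

open Classical

-- The action of `s_i` from the proof of the strong exchange condition (Björner–Brenti,
-- Thm. 1.4.3), extended from reflections to all of `W`.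
noncomputable def reflStep (i : B) : Function.End (W × ZMod 2) :=
  fun p => (cs.simple i * p.1 * cs.simple i, p.2 + if p.1 = cs.simple i then 1 else 0)

theorem simple_mul_simple_conj_eq_iff (i j : B) (w y : W) :
    cs.simple i * cs.simple j * w * (cs.simple j * cs.simple i) = y ↔
      w = cs.simple j * cs.simple i * y * (cs.simple i * cs.simple j) := by
  constructor <;> rintro rfl <;> simp [mul_assoc]

theorem simple_conj_eq_iff (i : B) (w y : W) :
    cs.simple i * w * cs.simple i = y ↔ w = cs.simple i * y * cs.simple i := by
  constructor <;> rintro rfl <;> simp [mul_assoc]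

theorem reflStep_mul_pow_apply (i j : B) (k : ℕ) (w : W) (z : ZMod 2) :
    ((cs.reflStep i * cs.reflStep j) ^ k) (w, z) =
      ((cs.simple i * cs.simple j) ^ k * w * (cs.simple j * cs.simple i) ^ k,
        z + ∑ n ∈ Finset.range (2 * k),
          if w = (cs.simple j * cs.simple i) ^ n * cs.simple j then 1 else 0) := by
  induction k generalizing w z with
  | zero => simp [Function.End.one_def]
  | succ k ih =>
    have hconj (n : ℕ) : cs.simple i * cs.simple j * w * (cs.simple j * cs.simple i) =
        (cs.simple j * cs.simple i) ^ n * cs.simple j ↔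
        w = (cs.simple j * cs.simple i) ^ (n + 2) * cs.simple j := by
      rw [simple_mul_simple_conj_eq_iff, show n + 2 = 1 + n + 1 by ring, pow_succ, pow_add,
        pow_one]
      simp only [mul_assoc]
    rw [pow_succ]
    refine (ih _ _).trans (Prod.ext ?_ ?_)
    · simp only [reflStep, pow_succ (cs.simple i * cs.simple j),
        pow_succ' (cs.simple j * cs.simple i), mul_assoc]
    · have hconj₁ : cs.simple j * w * cs.simple j = cs.simple i ↔
          w = (cs.simple j * cs.simple i) ^ (0 + 1) * cs.simple j := by
        rw [simple_conj_eq_iff, zero_add, pow_one, mul_assoc]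
      have hassoc : cs.simple i * (cs.simple j * w * cs.simple j) * cs.simple i =
          cs.simple i * cs.simple j * w * (cs.simple j * cs.simple i) := by
        simp only [mul_assoc]
      rw [show 2 * (k + 1) = 2 * k + 1 + 1 by ring, Finset.sum_range_succ', Finset.sum_range_succ']
      simp only [reflStep, hassoc, hconj, hconj₁, pow_zero, one_mul]
      abel

theorem isLiftable_reflStep : M.IsLiftable cs.reflStep := by
  intro i j
  funext ⟨w, z⟩
  have hij := cs.simple_mul_simple_pow i j
  have hji := cs.simple_mul_simple_pow' i j
  generalize M i j = m at hij hji ⊢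
  change _ = (w, z)
  rw [reflStep_mul_pow_apply, hij, hji, two_mul, Finset.sum_range_add]
  simp only [pow_add, hji, one_mul, mul_one, CharTwo.add_self_eq_zero, add_zero]

noncomputable def reflRep : W →* Function.End (W × ZMod 2) :=
  cs.lift ⟨cs.reflStep, cs.isLiftable_reflStep⟩

noncomputable def inversionParity (w t : W) : ZMod 2 := (cs.reflRep w (t, 0)).2

theorem reflRep_simple (i : B) : cs.reflRep (cs.simple i) = cs.reflStep i :=
  cs.lift_apply_simple _ i

theorem reflRep_apply (w t : W) (z : ZMod 2) :
    cs.reflRep w (t, z) = (w * t * w⁻¹, z + cs.inversionParity w t) := by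
  induction w using cs.simple_induction_left generalizing t z with
  | one => simp [inversionParity, Function.End.one_def]
  | mul_simple_left w i ih =>
    have hstep (z : ZMod 2) : cs.reflRep (cs.simple i * w) (t, z) =
        cs.reflStep i (w * t * w⁻¹, z + cs.inversionParity w t) := by
      rw [map_mul, reflRep_simple, ← ih]
      rfl
    simp [inversionParity, hstep, reflStep, add_assoc, mul_assoc]

theorem inversionParity_mul (w' w t : W) :
    cs.inversionParity (w' * w) t =
      cs.inversionParity w t + cs.inversionParity w' (w * t * w⁻¹) := by
  have h : cs.reflRep (w' * w) (t, 0) = cs.reflRep w' (cs.reflRep w (t, 0)) := by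
    rw [map_mul]; rfl
  rw [inversionParity, h, reflRep_apply, reflRep_apply, zero_add]

theorem inversionParity_simple (i : B) (t : W) :
    cs.inversionParity (cs.simple i) t = if t = cs.simple i then 1 else 0 := by
  simp [inversionParity, reflRep_simple, reflStep]

theorem inversionParity_wordProd (ω : List B) (t : W) :
    cs.inversionParity (cs.wordProd ω) t = ((cs.rightInvSeq ω).count t : ZMod 2) := by
  induction ω with
  | nil => simp [inversionParity, Function.End.one_def]
  | cons i ω ih =>
    have hconj : cs.wordProd ω * t * (cs.wordProd ω)⁻¹ = cs.simple i ↔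
        (cs.wordProd ω)⁻¹ * cs.simple i * cs.wordProd ω = t := by
      constructor <;> intro h <;> rw [← h] <;> group
    rw [wordProd_cons, inversionParity_mul, ih, inversionParity_simple, rightInvSeq,
      List.count_cons]
    simp [hconj]

theorem inversionParity_one (t : W) : cs.inversionParity 1 t = 0 := by
  simp [inversionParity, Function.End.one_def]

theorem inversionParity_inv (w t : W) :
    cs.inversionParity w⁻¹ (w * t * w⁻¹) = cs.inversionParity w t := by
  have h := cs.inversionParity_mul w⁻¹ w t
  rw [inv_mul_cancel, inversionParity_one] at h
  exact (CharTwo.add_eq_zero.mp h.symm).symm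

theorem inversionParity_self {t : W} (ht : cs.IsReflection t) : cs.inversionParity t t = 1 := by
  obtain ⟨u, i, rfl⟩ := ht
  rw [inversionParity_mul cs (u * cs.simple i) u⁻¹,
    show u⁻¹ * (u * cs.simple i * u⁻¹) * u⁻¹⁻¹ = cs.simple i by group, inversionParity_inv,
    inversionParity_mul cs u,
    show cs.simple i * cs.simple i * (cs.simple i)⁻¹ = cs.simple i by group, inversionParity_simple,
    if_pos rfl, add_left_comm, CharTwo.add_self_eq_zero, add_zero]

theorem mem_rightInvSeq_of_inversionParity_eq_one {ω : List B} {t : W}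
    (h : cs.inversionParity (cs.wordProd ω) t = 1) : t ∈ cs.rightInvSeq ω := by
  rw [inversionParity_wordProd] at h
  by_contra hn
  rw [List.count_eq_zero_of_not_mem hn, Nat.cast_zero] at h
  exact zero_ne_one h

theorem length_mul_lt_of_inversionParity_eq_one {w t : W} (h : cs.inversionParity w t = 1) :
    cs.length (w * t) < cs.length w := by
  obtain ⟨ω, hω, rfl⟩ := cs.exists_isReduced w
  exact (cs.isRightInversion_of_mem_rightInvSeq hω
    (cs.mem_rightInvSeq_of_inversionParity_eq_one h)).2

theorem inversionParity_eq_one_iff {w t : W} (ht : cs.IsReflection t) :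
    cs.inversionParity w t = 1 ↔ cs.length (w * t) < cs.length w := by
  refine ⟨cs.length_mul_lt_of_inversionParity_eq_one, fun hlt => ?_⟩
  have hwt : cs.inversionParity (w * t) t ≠ 1 := fun h => by
    have := cs.length_mul_lt_of_inversionParity_eq_one h
    rw [mul_assoc, ht.mul_self, mul_one] at this
    omega
  have h := cs.inversionParity_mul (w * t) t t
  rw [mul_assoc, ht.mul_self, mul_one, inversionParity_self cs ht, one_mul, ht.inv] at h
  rw [h, ZMod.eq_zero_of_ne_one hwt, add_zero]

theorem mem_rightInvSeq_of_length_mul_lt {ω : List B} {t : W} (ht : cs.IsReflection t)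
    (h : cs.length (cs.wordProd ω * t) < cs.length (cs.wordProd ω)) : t ∈ cs.rightInvSeq ω :=
  cs.mem_rightInvSeq_of_inversionParity_eq_one ((cs.inversionParity_eq_one_iff ht).mpr h)

theorem exists_eraseIdx_of_length_mul_lt {ω : List B} {t : W} (ht : cs.IsReflection t)
    (h : cs.length (cs.wordProd ω * t) < cs.length (cs.wordProd ω)) :
    ∃ j < ω.length, cs.wordProd ω * t = cs.wordProd (ω.eraseIdx j) := by
  obtain ⟨j, hj, rfl⟩ := List.getElem_of_mem (cs.mem_rightInvSeq_of_length_mul_lt ht h)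
  refine ⟨j, by simpa using hj, ?_⟩
  rw [← wordProd_mul_getD_rightInvSeq, List.getD_eq_getElem]

end InversionParity

section SpecialSubgroup

def specialSubgroup (S : Set B) : Subgroup W := closure (cs.simple '' S)

variable {cs} {S : Set B}

theorem simple_mem_specialSubgroup {i : B} (hi : i ∈ S) : cs.simple i ∈ cs.specialSubgroup S :=
  subset_closure ⟨i, hi, rfl⟩

theorem wordProd_mem_specialSubgroup {ω : List B} (hω : ∀ i ∈ ω, i ∈ S) :
    cs.wordProd ω ∈ cs.specialSubgroup S := by
  induction ω with
  | nil => exact one_mem _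
  | cons i ω ih =>
    rw [wordProd_cons]
    exact mul_mem (simple_mem_specialSubgroup (hω i List.mem_cons_self))
      (ih fun j hj => hω j (List.mem_cons_of_mem i hj))

theorem exists_word_of_mem_specialSubgroup {w : W} (hw : w ∈ cs.specialSubgroup S) :
    ∃ ω : List B, (∀ i ∈ ω, i ∈ S) ∧ cs.wordProd ω = w := by
  induction hw using closure_induction with
  | mem _ hx =>
    obtain ⟨i, hi, rfl⟩ := hx
    exact ⟨[i], by simpa using hi, cs.wordProd_singleton i⟩
  | one => exact ⟨[], by simp, cs.wordProd_nil⟩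
  | mul _ _ _ _ hx hy =>
    obtain ⟨ω₁, h₁, rfl⟩ := hx
    obtain ⟨ω₂, h₂, rfl⟩ := hy
    exact ⟨ω₁ ++ ω₂, fun i hi => (List.mem_append.mp hi).elim (h₁ i) (h₂ i),
      cs.wordProd_append ω₁ ω₂⟩
  | inv _ _ hx =>
    obtain ⟨ω, hω, rfl⟩ := hx
    exact ⟨ω.reverse, fun i hi => hω i (List.mem_reverse.mp hi), cs.wordProd_reverse ω⟩

variable (cs) in
theorem exists_isReduced_sublist (ω : List B) :
    ∃ ω' : List B, ω'.Sublist ω ∧ cs.IsReduced ω' ∧ cs.wordProd ω' = cs.wordProd ω := by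
  induction ω using List.reverseRecOn with
  | nil => exact ⟨[], List.Sublist.refl _, by simp [IsReduced], rfl⟩
  | append_singleton ω i ih =>
    obtain ⟨ω', hsub, hred, hprod⟩ := ih
    rw [wordProd_append, wordProd_singleton, ← hprod]
    rcases cs.length_mul_simple (cs.wordProd ω') i with hlen | hlen
    · refine ⟨ω' ++ [i], hsub.append (List.Sublist.refl _), ?_, by simp [wordProd_append]⟩
      rw [IsReduced, wordProd_append, wordProd_singleton, hlen, hred, List.length_append,
        List.length_singleton]
    · obtain ⟨j, hj, herase⟩ :=
        cs.exists_eraseIdx_of_length_mul_lt (ω := ω') (cs.isReflection_simple i) (by omega)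
      refine ⟨ω'.eraseIdx j, (List.eraseIdx_sublist ω' j).trans
        (hsub.trans (List.sublist_append_left ω [i])), ?_, herase.symm⟩
      have := List.length_eraseIdx_add_one hj
      rw [IsReduced, ← herase]
      rw [IsReduced] at hred
      omega

theorem exists_isReduced_of_mem_specialSubgroup {w : W} (hw : w ∈ cs.specialSubgroup S) :
    ∃ ω : List B, (∀ i ∈ ω, i ∈ S) ∧ cs.IsReduced ω ∧ cs.wordProd ω = w := by
  obtain ⟨ω, hω, rfl⟩ := exists_word_of_mem_specialSubgroup hw
  obtain ⟨ω', hsub, hred, hprod⟩ := cs.exists_isReduced_sublist ω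
  exact ⟨ω', fun i hi => hω i (hsub.subset hi), hred, hprod⟩

theorem length_mul_eq_add_of_minimal {m : W}
    (hmin : ∀ u ∈ cs.specialSubgroup S, cs.length m ≤ cs.length (m * u)) {u : W}
    (hu : u ∈ cs.specialSubgroup S) : cs.length (m * u) = cs.length m + cs.length u := by
  suffices h : ∀ β : List B, (∀ i ∈ β, i ∈ S) → cs.IsReduced β →
      cs.length (m * cs.wordProd β) = cs.length m + β.length by
    obtain ⟨β, hβS, hβ, rfl⟩ := exists_isReduced_of_mem_specialSubgroup hu
    rw [h β hβS hβ, hβ.eq]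
  intro β
  induction β using List.reverseRecOn with
  | nil => simp
  | append_singleton β i ih =>
    intro hS hred
    have hβ : cs.IsReduced β := by simpa using hred.take β.length
    have hβS : ∀ j ∈ β, j ∈ S := fun j hj => hS j (List.mem_append_left _ hj)
    have hlen := ih hβS hβ
    have hβi : cs.length (cs.wordProd β) < cs.length (cs.wordProd β * cs.simple i) := by
      have := hred.eq
      rw [wordProd_append, wordProd_singleton, List.length_append, List.length_singleton,
        ← hβ.eq] at this
      omega
    rw [wordProd_append, wordProd_singleton, ← mul_assoc, List.length_append,
      List.length_singleton]
    refine ((cs.length_mul_simple _ i).resolve_right fun hdesc => ?_).trans (by omega)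
    -- Otherwise the cocycle identity makes `π β * s i * (π β)⁻¹ ∈ W_S` a right inversion of `m`.
    have hsi := cs.isReflection_simple i
    have hβ₀ : cs.inversionParity (cs.wordProd β) (cs.simple i) = 0 :=
      ZMod.eq_zero_of_ne_one fun h => lt_asymm hβi ((cs.inversionParity_eq_one_iff hsi).mp h)
    have hmβ := (cs.inversionParity_eq_one_iff (w := m * cs.wordProd β) hsi).mpr (by omega)
    rw [inversionParity_mul, hβ₀, zero_add, cs.inversionParity_eq_one_iff (hsi.conj _),
      ← mul_assoc] at hmβ
    have hr : cs.wordProd β * cs.simple i * (cs.wordProd β)⁻¹ ∈ cs.specialSubgroup S :=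
      mul_mem (mul_mem (wordProd_mem_specialSubgroup hβS)
        (simple_mem_specialSubgroup (hS i (by simp)))) (inv_mem (wordProd_mem_specialSubgroup hβS))
    exact (hmin _ hr).not_gt (by simpa only [mul_assoc] using hmβ)

theorem length_mul_eq_add_of_minimal' {m : W}
    (hmin : ∀ u ∈ cs.specialSubgroup S, cs.length m ≤ cs.length (u * m)) {u : W}
    (hu : u ∈ cs.specialSubgroup S) : cs.length (u * m) = cs.length u + cs.length m := by
  have hmin' : ∀ u ∈ cs.specialSubgroup S, cs.length m⁻¹ ≤ cs.length (m⁻¹ * u) := fun u hu => by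
    simpa [← cs.length_inv (m⁻¹ * u)] using hmin u⁻¹ (inv_mem hu)
  rw [← cs.length_inv, mul_inv_rev, length_mul_eq_add_of_minimal hmin' (inv_mem hu),
    cs.length_inv, cs.length_inv, add_comm]

variable (cs) in
theorem exists_eq_mul_of_minimal (w : W) (S : Set B) :
    ∃ m : W, ∃ e ∈ cs.specialSubgroup S, w = m * e ∧
      ∀ u ∈ cs.specialSubgroup S, cs.length (m * u) = cs.length m + cs.length u := by
  obtain ⟨u₀, hu₀, hmin⟩ := (measure fun u => cs.length (w * u)).wf.has_min
    (cs.specialSubgroup S : Set W) ⟨1, one_mem _⟩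
  refine ⟨w * u₀, u₀⁻¹, inv_mem hu₀, by group, fun u hu =>
    length_mul_eq_add_of_minimal (fun u hu => ?_) hu⟩
  rw [mul_assoc]
  exact not_lt.mp (hmin _ (mul_mem hu₀ hu))

end SpecialSubgroup

section Dihedral

variable {cs}

theorem IsReduced.append_singleton_eq_alternatingWord {i j : B} {ω : List B}
    (hred : cs.IsReduced (ω ++ [j])) (hij : ∀ a ∈ ω, a = i ∨ a = j) :
    ω ++ [j] = alternatingWord i j (ω.length + 1) := by
  induction ω using List.reverseRecOn generalizing i j with
  | nil => rfl
  | append_singleton ω a ih =>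
    have ha : a = i := (hij a (by simp)).resolve_right fun haj => by
      subst haj
      have := cs.length_wordProd_le ω
      rw [IsReduced, wordProd_append, wordProd_append, wordProd_singleton, mul_assoc,
        simple_mul_simple_self, mul_one, List.length_append, List.length_append,
        List.length_singleton] at hred
      omega
    subst ha
    have hred' : cs.IsReduced (ω ++ [a]) := by
      simpa only [List.take_left] using hred.take (ω ++ [a]).length
    rw [List.length_append, List.length_singleton,
      ih hred' fun b hb => (hij b (by simp [hb])).symm, alternatingWord_succ a j,
      List.concat_eq_append]

variable (cs)

theorem inv_wordProd_alternatingWord_mul_succ (i j : B) (k : ℕ) :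
    (cs.wordProd (alternatingWord i j k))⁻¹ * cs.wordProd (alternatingWord i j (k + 1)) =
      (cs.simple j * cs.simple i) ^ k * cs.simple j := by
  induction k generalizing i j with
  | zero => simp [alternatingWord]
  | succ k ih =>
    rw [alternatingWord_succ i j k, alternatingWord_succ i j (k + 1)]
    simp only [List.concat_eq_append, wordProd_append, wordProd_singleton, mul_inv_rev,
      inv_simple]
    calc _ = cs.simple j * ((cs.wordProd (alternatingWord j i k))⁻¹ *
          cs.wordProd (alternatingWord j i (k + 1))) * cs.simple j := by simp only [mul_assoc]
      _ = _ := by rw [ih, ← mul_assoc, ← mul_pow_mul, pow_succ]; simp only [mul_assoc]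

theorem mem_rightInvSeq_alternatingWord {i j : B} {n : ℕ} {r : W}
    (hr : r ∈ cs.rightInvSeq (alternatingWord i j n)) :
    ∃ k < n, r = (cs.simple j * cs.simple i) ^ k * cs.simple j := by
  induction n with
  | zero => simp [alternatingWord] at hr
  | succ n ih =>
    have hcons : cs.rightInvSeq (alternatingWord i j (n + 1)) =
        (cs.wordProd (alternatingWord i j n))⁻¹ * cs.wordProd (alternatingWord i j (n + 1)) ::
          cs.rightInvSeq (alternatingWord i j n) := by
      rw [alternatingWord_succ']
      simp [rightInvSeq, wordProd_cons, mul_assoc]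
    rw [hcons, List.mem_cons, inv_wordProd_alternatingWord_mul_succ] at hr
    rcases hr with rfl | hr
    · exact ⟨n, n.lt_succ_self, rfl⟩
    · obtain ⟨k, hk, rfl⟩ := ih hr
      exact ⟨k, hk.trans n.lt_succ_self, rfl⟩

theorem isReflection_simple_conj (i j : B) :
    cs.IsReflection (cs.simple i * cs.simple j * cs.simple i) := by
  simpa using (cs.isReflection_simple j).conj (cs.simple i)

theorem le_length_mul_conj_of_mem_specialSubgroup {v t : B}
    (hvt : orderOf (cs.simple v * cs.simple t) = 0) {e : W}
    (he : e ∈ cs.specialSubgroup {v, t}) (ht : cs.length e < cs.length (e * cs.simple t)) :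
    cs.length e ≤ cs.length (e * (cs.simple t * cs.simple v * cs.simple t)) := by
  by_contra! hlt
  obtain ⟨α, hαS, hα, rfl⟩ := exists_isReduced_of_mem_specialSubgroup he
  obtain rfl | ⟨α, a, rfl⟩ := List.eq_nil_or_concat' α
  · simp at hlt
  have ha : a = v := (hαS a (by simp)).resolve_right fun hat => by
    subst hat
    have := cs.length_wordProd_le α
    rw [hα.eq, wordProd_append, wordProd_singleton, mul_assoc, simple_mul_simple_self,
      mul_one, List.length_append, List.length_singleton] at ht
    omega
  subst a
  have hr := cs.mem_rightInvSeq_of_length_mul_lt (cs.isReflection_simple_conj t v) hlt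
  rw [hα.append_singleton_eq_alternatingWord (i := t) fun b hb => (hαS b (by simp [hb])).symm]
    at hr
  obtain ⟨k, -, hk⟩ := cs.mem_rightInvSeq_alternatingWord hr
  refine orderOf_eq_zero_iff'.mp hvt (k + 2) (by omega) ?_
  calc (cs.simple v * cs.simple t) ^ (k + 2)
      = (cs.simple v * cs.simple t) ^ k * cs.simple v *
          (cs.simple t * cs.simple v * cs.simple t) := by simp only [pow_add, sq, mul_assoc]
    _ = 1 := by rw [← hk]; simp [mul_assoc]

theorem le_length_mul_conj {v t : B} (hvt : orderOf (cs.simple v * cs.simple t) = 0) {h : W}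
    (ht : cs.length h < cs.length (h * cs.simple t)) :
    cs.length h ≤ cs.length (h * (cs.simple t * cs.simple v * cs.simple t)) := by
  obtain ⟨m, e, he, rfl, hadd⟩ := cs.exists_eq_mul_of_minimal h {v, t}
  have hsv : cs.simple v ∈ cs.specialSubgroup {v, t} := simple_mem_specialSubgroup (by simp)
  have hst : cs.simple t ∈ cs.specialSubgroup {v, t} := simple_mem_specialSubgroup (by simp)
  rw [mul_assoc, hadd _ (mul_mem he hst), hadd _ he] at ht
  rw [mul_assoc, hadd _ (mul_mem he (mul_mem (mul_mem hst hsv) hst)), hadd _ he]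
  have := cs.le_length_mul_conj_of_mem_specialSubgroup hvt he (by omega)
  omega

end Dihedral

end CoxeterSystem

namespace CoxeterMatrix

section PlaneRotation

open Complex

/-- The action of `σ_a σ_b` on the coefficients `(α, β)` of `α e_a + β e_b`, where
`c = B(e_a, e_b)`. -/
def planeRotation (c : ℝ) (q : ℝ × ℝ) : ℝ × ℝ :=
  ((4 * c ^ 2 - 1) * q.1 + 2 * c * q.2, -(2 * c * q.1) - q.2)

/-- For `c = -cos θ`, the map `(α, β) ↦ α - β e^{iθ}` conjugates `planeRotation c` to the
rotation by `-2θ`. -/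
theorem planeRotation_eq_rotation (θ : ℝ) (q : ℝ × ℝ) :
    ((planeRotation (-Real.cos θ) q).1 : ℂ) - (planeRotation (-Real.cos θ) q).2 * exp (θ * I) =
      exp (-(2 * θ) * I) * (q.1 - q.2 * exp (θ * I)) := by
  have hcos : cos θ = (exp (θ * I) + (exp (θ * I))⁻¹) / 2 := by
    rw [cos, ← exp_neg, neg_mul]
  have hrot : exp (-(2 * θ) * I) = (exp (θ * I))⁻¹ ^ 2 := by
    rw [← exp_neg, ← exp_nat_mul]; push_cast; ring_nf
  have hu : exp (θ * I) ≠ 0 := exp_ne_zero _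
  simp only [planeRotation]
  push_cast
  rw [hcos, hrot]
  field_simp
  ring

theorem eq_of_sub_mul_exp_eq {θ : ℝ} (hθ : Real.sin θ ≠ 0) {q q' : ℝ × ℝ}
    (h : (q.1 : ℂ) - q.2 * exp (θ * I) = q'.1 - q'.2 * exp (θ * I)) : q = q' := by
  have him := congrArg im h
  have hre := congrArg re h
  simp only [sub_im, sub_re, mul_im, mul_re, ofReal_re, ofReal_im, exp_ofReal_mul_I_re,
    exp_ofReal_mul_I_im, zero_mul, add_zero, sub_zero, zero_sub, neg_inj] at him hre
  have h2 : q.2 = q'.2 := mul_right_cancel₀ hθ him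
  rw [h2] at hre
  exact Prod.ext (by linarith) h2

theorem planeRotation_iterate_eq_id {m : ℕ} (hm : 2 ≤ m) :
    (planeRotation (-Real.cos (Real.pi / m)))^[m] = id := by
  set θ := Real.pi / m
  have hsin : Real.sin θ ≠ 0 := (Real.sin_pos_of_pos_of_lt_pi (by positivity)
    (div_lt_self Real.pi_pos (by exact_mod_cast hm))).ne'
  have hψ (k : ℕ) (q : ℝ × ℝ) :
      (((planeRotation (-Real.cos θ))^[k] q).1 : ℂ) -
          ((planeRotation (-Real.cos θ))^[k] q).2 * exp (θ * I) =
        exp (-(2 * θ) * I) ^ k * (q.1 - q.2 * exp (θ * I)) := by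
    induction k with
    | zero => simp
    | succ k ih => rw [Function.iterate_succ_apply', planeRotation_eq_rotation, ih, pow_succ']; ring
  have hperiod : exp (-(2 * θ) * I) ^ m = 1 := by
    rw [← exp_nat_mul, show (m : ℂ) * (-(2 * θ) * I) = -(2 * Real.pi * I) by
      have : (m : ℂ) ≠ 0 := Nat.cast_ne_zero.mpr (by omega)
      push_cast [θ]; field_simp, exp_neg, exp_two_pi_mul_I, inv_one]
  funext q
  have h := hψ m q
  rw [hperiod, one_mul] at h
  exact eq_of_sub_mul_exp_eq hsin h

theorem planeRotation_neg_one_iterate (k : ℕ) :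
    (planeRotation (-1))^[k] (1, 0) = ((2 * k + 1 : ℝ), (2 * k : ℝ)) := by
  induction k with
  | zero => simp
  | succ k ih =>
    rw [Function.iterate_succ_apply', ih]
    simp only [planeRotation, Prod.mk.injEq]
    push_cast
    constructor <;> ring

end PlaneRotation

variable {B : Type*} (M : CoxeterMatrix B)

section GeometricRepresentation

open Finsupp

/-- The symmetric bilinear form `B(e_i, e_j) = -cos (π / M i j)` of the geometric representation,
where the entry `0` of `M` stands for `∞` and gives `B(e_i, e_j) = -1`. -/
noncomputable def cosForm (i j : B) : ℝ :=
  if M i j = 0 then -1 else -Real.cos (Real.pi / M i j)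

theorem cosForm_comm (i j : B) : M.cosForm i j = M.cosForm j i := by
  simp only [cosForm, M.symmetric i j]

theorem cosForm_self (i : B) : M.cosForm i i = 1 := by
  simp [cosForm]

noncomputable def cosPairing (i : B) : (B →₀ ℝ) →ₗ[ℝ] ℝ :=
  linearCombination ℝ (M.cosForm i)

theorem cosPairing_single (i j : B) (c : ℝ) : M.cosPairing i (single j c) = c * M.cosForm i j := by
  simp [cosPairing]

noncomputable def geomRefl (i : B) : Function.End (B →₀ ℝ) :=
  fun x => x - (2 * M.cosPairing i x) • single i 1

theorem geomRefl_geomRefl (i : B) (x : B →₀ ℝ) : M.geomRefl i (M.geomRefl i x) = x := by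
  simp only [geomRefl, map_sub, map_smul, cosPairing_single, cosForm_self, smul_eq_mul]
  module

theorem geomRefl_mul_geomRefl_apply {a b : B} {p : B →₀ ℝ} (hpa : M.cosPairing a p = 0)
    (hpb : M.cosPairing b p = 0) (q : ℝ × ℝ) :
    (M.geomRefl a * M.geomRefl b) (p + q.1 • single a 1 + q.2 • single b 1) =
      p + (planeRotation (M.cosForm a b) q).1 • single a 1 +
        (planeRotation (M.cosForm a b) q).2 • single b 1 := by
  change M.geomRefl a (M.geomRefl b _) = _
  simp only [geomRefl, planeRotation, map_add, map_sub, map_smul, cosPairing_single, cosForm_self,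
    hpa, hpb, smul_eq_mul, M.cosForm_comm b a]
  module

theorem geomRefl_mul_geomRefl_pow_apply {a b : B} {p : B →₀ ℝ} (hpa : M.cosPairing a p = 0)
    (hpb : M.cosPairing b p = 0) (k : ℕ) (q : ℝ × ℝ) :
    ((M.geomRefl a * M.geomRefl b) ^ k) (p + q.1 • single a 1 + q.2 • single b 1) =
      p + ((planeRotation (M.cosForm a b))^[k] q).1 • single a 1 +
        ((planeRotation (M.cosForm a b))^[k] q).2 • single b 1 := by
  induction k with
  | zero => rfl
  | succ k ih =>
    rw [pow_succ']
    change (M.geomRefl a * M.geomRefl b) (((M.geomRefl a * M.geomRefl b) ^ k) _) = _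
    rw [ih, geomRefl_mul_geomRefl_apply M hpa hpb, Function.iterate_succ_apply']

theorem two_le_of_ne {a b : B} (hab : a ≠ b) (h0 : M a b ≠ 0) : 2 ≤ M a b := by
  have := M.off_diagonal a b hab
  omega

theorem cosForm_sq_lt_one {a b : B} (hab : a ≠ b) (h0 : M a b ≠ 0) : M.cosForm a b ^ 2 < 1 := by
  have hm := M.two_le_of_ne hab h0
  have hsin : 0 < Real.sin (Real.pi / M a b) := Real.sin_pos_of_pos_of_lt_pi (by positivity)
    (div_lt_self Real.pi_pos (by exact_mod_cast hm))
  rw [cosForm, if_neg h0, neg_sq]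
  nlinarith [Real.sin_sq_add_cos_sq (Real.pi / M a b)]

theorem isLiftable_geomRefl : M.IsLiftable M.geomRefl := by
  intro a b
  by_cases h0 : M a b = 0
  · rw [h0, pow_zero]
  by_cases hab : a = b
  · subst hab
    rw [M.diagonal, pow_one]
    funext x
    exact M.geomRefl_geomRefl a x
  funext x
  have hc : M.cosForm a b = -Real.cos (Real.pi / M a b) := if_neg h0
  have hc2 : 1 - M.cosForm a b ^ 2 ≠ 0 := (sub_pos.mpr (M.cosForm_sq_lt_one hab h0)).ne'
  -- Split `x = p + q.1 e_a + q.2 e_b` with `p` orthogonal to `e_a` and `e_b`.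
  set q : ℝ × ℝ :=
    ((M.cosPairing a x - M.cosForm a b * M.cosPairing b x) / (1 - M.cosForm a b ^ 2),
      (M.cosPairing b x - M.cosForm a b * M.cosPairing a x) / (1 - M.cosForm a b ^ 2))
  set p := x - q.1 • single a 1 - q.2 • single b 1
  have hpa : M.cosPairing a p = 0 := by
    simp only [p, q, map_sub, map_smul, cosPairing_single, cosForm_self, smul_eq_mul]
    field_simp
    ring
  have hpb : M.cosPairing b p = 0 := by
    simp only [p, q, map_sub, map_smul, cosPairing_single, cosForm_self, smul_eq_mul,
      M.cosForm_comm b a]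
    field_simp
    ring
  have hx : x = p + q.1 • single a 1 + q.2 • single b 1 := by simp only [p]; abel
  change ((M.geomRefl a * M.geomRefl b) ^ M a b) x = x
  rw [hx, geomRefl_mul_geomRefl_pow_apply M hpa hpb, hc,
    planeRotation_iterate_eq_id (M.two_le_of_ne hab h0), id]

end GeometricRepresentation

end CoxeterMatrix

namespace CoxeterSystem

variable {B W : Type*} [Group W] {M : CoxeterMatrix B}

theorem orderOf_simple_mul_simple_eq_zero (cs : CoxeterSystem M W) {v t : B} (h : M v t = 0) :
    orderOf (cs.simple v * cs.simple t) = 0 := by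
  have hvt : v ≠ t := by
    rintro rfl
    simp at h
  refine orderOf_eq_zero_iff'.mpr fun k hk hpow => ?_
  have hrep : (M.geomRefl v * M.geomRefl t) ^ k = 1 := by
    simpa [lift_apply_simple] using congrArg (cs.lift ⟨M.geomRefl, M.isLiftable_geomRefl⟩) hpow
  have h1 := M.geomRefl_mul_geomRefl_pow_apply (map_zero (M.cosPairing v))
    (map_zero (M.cosPairing t)) k (1, 0)
  rw [hrep, CoxeterMatrix.cosForm, if_pos h, CoxeterMatrix.planeRotation_neg_one_iterate] at h1
  have h2 : (1 : ℝ) = 2 * k + 1 := by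
    simpa [hvt.symm, Function.End.one_def] using congrArg (· v) h1
  exact hk.ne' (by exact_mod_cast (by linarith : (k : ℝ) = 0))

section Normalizer

variable {cs : CoxeterSystem M W} {S : Set B}

theorem inversionParity_simple_conj_of_mul_simple_eq {h : W} {i j : B}
    (hij : h * cs.simple i = cs.simple j * h) (r : W) :
    cs.inversionParity h (cs.simple i * r * cs.simple i) = cs.inversionParity h r := by
  have hj : h * cs.simple i * h⁻¹ = cs.simple j := by rw [hij, mul_inv_cancel_right]
  have hr : h * (cs.simple i * r * cs.simple i) * h⁻¹ = cs.simple j ↔ r = cs.simple i := by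
    rw [← hj, mul_left_inj, mul_right_inj, simple_conj_eq_iff, simple_mul_simple_self, one_mul]
  have h₁ := cs.inversionParity_mul h (cs.simple i) (cs.simple i * r * cs.simple i)
  rw [hij, inversionParity_mul, inversionParity_simple, inversionParity_simple, hr,
    simple_conj_eq_iff, simple_mul_simple_self, one_mul, inv_simple,
    show cs.simple i * (cs.simple i * r * cs.simple i) * cs.simple i = r by simp [mul_assoc],
    add_comm] at h₁
  exact add_left_cancel h₁

theorem exists_mul_simple_eq_of_mem_normalizer {h : W}
    (hN : h ∈ normalizer (cs.specialSubgroup S : Set W))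
    (hmin : ∀ u ∈ cs.specialSubgroup S, cs.length h ≤ cs.length (u * h)) {t : B} (ht : t ∈ S) :
    ∃ t' : B, h * cs.simple t = cs.simple t' * h ∧ cs.length h < cs.length (h * cs.simple t) := by
  have hx : h * cs.simple t * h⁻¹ ∈ cs.specialSubgroup S :=
    (mem_normalizer_iff.mp hN _).mp (simple_mem_specialSubgroup ht)
  have hxh : h * cs.simple t * h⁻¹ * h = h * cs.simple t := inv_mul_cancel_right _ _
  have hadd := length_mul_eq_add_of_minimal' hmin hx
  have hle := cs.length_mul_le h (cs.simple t)
  have hne : cs.length (h * cs.simple t * h⁻¹) ≠ 0 := by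
    rw [Ne, length_eq_zero_iff, mul_inv_eq_one, mul_eq_left]
    intro h1
    simpa [h1] using cs.length_simple t
  rw [hxh] at hadd
  rw [length_simple] at hle
  obtain ⟨t', ht'⟩ :=
    cs.length_eq_one_iff.mp (show cs.length (h * cs.simple t * h⁻¹) = 1 by omega)
  exact ⟨t', by rw [← hxh, ht'], by omega⟩

theorem eq_one_of_mem_normalizer_of_minimal (hmax : ∀ v ∉ S, ∃ t ∈ S, M v t = 0) {h : W}
    (hN : h ∈ normalizer (cs.specialSubgroup S : Set W))
    (hmin : ∀ p ∈ cs.specialSubgroup S, ∀ q ∈ cs.specialSubgroup S,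
      cs.length h ≤ cs.length (p * h * q)) : h = 1 := by
  by_contra hne
  obtain ⟨v, hv⟩ := cs.exists_rightDescent_of_ne_one hne
  have hvS : v ∉ S := fun hvS => by
    have := hmin 1 (one_mem _) _ (simple_mem_specialSubgroup hvS)
    rw [one_mul] at this
    exact absurd hv (not_lt.mpr this)
  obtain ⟨t, htS, hvt⟩ := hmax v hvS
  obtain ⟨t', hconj, hlong⟩ := exists_mul_simple_eq_of_mem_normalizer hN
    (fun u hu => by simpa using hmin u hu 1 (one_mem _)) htS
  have hshort : cs.length (h * (cs.simple t * cs.simple v * cs.simple t)) < cs.length h := by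
    rw [← cs.inversionParity_eq_one_iff (cs.isReflection_simple_conj t v),
      inversionParity_simple_conj_of_mul_simple_eq hconj,
      cs.inversionParity_eq_one_iff (cs.isReflection_simple v)]
    exact hv
  exact absurd (cs.le_length_mul_conj (cs.orderOf_simple_mul_simple_eq_zero hvt) hlong)
    (not_le.mpr hshort)

variable (cs) in
theorem normalizer_specialSubgroup_eq (hmax : ∀ v ∉ S, ∃ t ∈ S, M v t = 0) :
    normalizer (cs.specialSubgroup S : Set W) = cs.specialSubgroup S := by
  refine le_antisymm (fun g hg => ?_) le_normalizer
  set P := cs.specialSubgroup S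
  obtain ⟨⟨p, q⟩, ⟨hp, hq⟩, hmin⟩ :=
    (measure fun pq : W × W => cs.length (pq.1 * g * pq.2)).wf.has_min
      ((P : Set W) ×ˢ (P : Set W)) ⟨(1, 1), one_mem P, one_mem P⟩
  have h1 : p * g * q = 1 := eq_one_of_mem_normalizer_of_minimal hmax
    (mul_mem (mul_mem (le_normalizer hp) hg) (le_normalizer hq)) fun p' hp' q' hq' => by
      have : cs.length (p * g * q) ≤ cs.length (p' * p * g * (q * q')) :=
        not_lt.mp (hmin (p' * p, q * q') ⟨mul_mem hp' hp, mul_mem hq hq'⟩)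
      simpa only [mul_assoc] using this
  rw [show g = p⁻¹ * (p * g * q) * q⁻¹ by group, h1, mul_one]
  exact mul_mem (inv_mem hp) (inv_mem hq)

end Normalizer

end CoxeterSystem

theorem CoxeterMatrix.IsMaxClique.exists_eq_zero {V : Type*} {M : CoxeterMatrix V} {Δ : Set V}
    (hΔ : M.IsMaxClique Δ) {v : V} (hv : v ∉ Δ) : ∃ t ∈ Δ, M v t = 0 := by
  by_contra! h
  have hclique : M.IsClique (insert v Δ) := hΔ.1.insert fun t ht hvt =>
    ⟨⟨hvt, h t ht⟩, ⟨hvt.symm, M.symmetric v t ▸ h t ht⟩⟩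
  exact hv ((hΔ.2 _ hclique (Set.subset_insert v Δ)).symm ▸ Set.mem_insert v Δ)

theorem Subgroup.centralizer_eq_map_center_of_le {G : Type*} [Group G] {H : Subgroup G}
    (h : centralizer (H : Set G) ≤ H) : centralizer (H : Set G) = (center H).map H.subtype := by
  ext x
  constructor
  · intro hx
    exact ⟨⟨x, h hx⟩, mem_center_iff.mpr fun y => Subtype.ext (hx y y.2), rfl⟩
  · rintro ⟨y, hy, rfl⟩ z hz
    exact congrArg Subtype.val (mem_center_iff.mp hy ⟨z, hz⟩)

theorem stmt8_general {V : Type*} (M : CoxeterMatrix V)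
    (Δ : Set V) (hΔ : M.IsMaxClique Δ) :
    Subgroup.normalizer (M.sp Δ : Set M.Group) = M.sp Δ ∧
      Subgroup.centralizer (M.sp Δ : Set M.Group) =
        (Subgroup.center ↥(M.sp Δ)).map (M.sp Δ).subtype := by
  have hN : normalizer (M.sp Δ : Set M.Group) = M.sp Δ :=
    M.toCoxeterSystem.normalizer_specialSubgroup_eq fun _ hv => hΔ.exists_eq_zero hv
  exact ⟨hN, centralizer_eq_map_center_of_le ((centralizer_le_normalizer _).trans hN.le)⟩

theorem stmt8 {V : Type*} [Fintype V] (M : CoxeterMatrix V)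
    (Δ : Set V) (hΔ : M.IsMaxClique Δ) :
    Subgroup.normalizer (M.sp Δ : Set M.Group) = M.sp Δ ∧
      Subgroup.centralizer (M.sp Δ : Set M.Group) =
        (Subgroup.center ↥(M.sp Δ)).map (M.sp Δ).subtype :=
  stmt8_general M Δ hΔ
end

section
/- Let W_Γ be an infinite Coxeter group whose outer automorphism group Out(W_Γ) = Aut(W_Γ)/Inn(W_Γ) is finite. Then there exists a subset S ⊆ V such that the special subgroup W_S is infinite and Aut(W_Γ) virtually surjects onto W_S. -/
open Function Subgroup

/-!
Let `S` be the set of vertices whose simple reflection has infinitely many conjugates. If `M i j`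
is odd then `s i` and `s j` are conjugate, so every relation survives when the generators outside
`S` are sent to `1`: this gives a retraction `r : W → W_S`.

The retraction kills the centre. Write a central `z` as a reduced word `ω`; then `z⁻¹` is the
product of the right inversion sequence of `ω`. The sign cocycle `η(w, t) = ±1` of the standard
permutation representation of `W` on `W × {±1}` satisfies `η(π ω, t) = (-1) ^ #{t in ris ω}`,
and for central `z` it is invariant under conjugation of `t`. Hence every conjugate of an entry of
`ris ω` is again an entry, so these reflections have finitely many conjugates, are conjugate to
simple reflections outside `S`, and are killed by `r`.

`W_S` is infinite: otherwise `W = N · W_S`, where `N` is the normal closure of the finitely many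
simple reflections outside `S`; their conjugates form a finite set of involutions, so `N` is finite
by Dietzmann's lemma, and `W` would be finite.

Finally `Inn(W) ≅ W / Z(W)` has finite index in `Aut(W)` and `r` factors through it.
-/

open Subgroup Pointwise

section Dietzmann

variable {G : Type*} [Group G] {X : Set G}

lemma exists_shorter_prod_eq_of_not_nodup (hinv : ∀ x ∈ X, x * x = 1)
    (hconj : ∀ g : G, ∀ x ∈ X, g * x * g⁻¹ ∈ X) {l : List X} (hl : ¬ l.Nodup) :
    ∃ l' : List X, l'.length < l.length ∧
      (l'.map Subtype.val).prod = (l.map Subtype.val).prod := by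
  obtain ⟨a, ha⟩ : ∃ a, List.Sublist [a, a] l := by simpa [List.nodup_iff_sublist] using hl
  obtain ⟨r₁, r₂, rfl, ha₁, ha₂⟩ := List.cons_sublist_iff.mp ha
  obtain ⟨p, q, rfl⟩ := List.append_of_mem ha₁
  obtain ⟨u, v, rfl⟩ := List.append_of_mem (List.singleton_sublist.mp ha₂)
  let c : X → X := fun y => ⟨a * y * (a : G)⁻¹, hconj a y y.2⟩
  have hc : ((q ++ u).map c).map Subtype.val =
      ((q ++ u).map Subtype.val).map (MulAut.conj (a : G)) := by
    simp only [List.map_map]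
    rfl
  have ha_inv : (a : G)⁻¹ = a := inv_eq_of_mul_eq_one_right (hinv a a.2)
  -- `a ⬝ (q ++ u) ⬝ a = (a ⬝ (q ++ u) ⬝ a⁻¹)` as `a` is an involution: the two copies of `a` merge.
  refine ⟨p ++ ((q ++ u).map c ++ v), by simp, ?_⟩
  rw [List.map_append, List.map_append, List.prod_append, List.prod_append, hc,
    ← map_list_prod, MulAut.conj_apply]
  simp only [List.map_append, List.map_cons, List.prod_append, List.prod_cons, ha_inv]
  group

lemma exists_nodup_prod_eq (hinv : ∀ x ∈ X, x * x = 1)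
    (hconj : ∀ g : G, ∀ x ∈ X, g * x * g⁻¹ ∈ X) (l : List X) :
    ∃ l' : List X, l'.Nodup ∧ (l'.map Subtype.val).prod = (l.map Subtype.val).prod := by
  by_cases hl : l.Nodup
  · exact ⟨l, hl, rfl⟩
  · obtain ⟨l', hlen, hprod⟩ := exists_shorter_prod_eq_of_not_nodup hinv hconj hl
    obtain ⟨l'', hnd, hprod'⟩ := exists_nodup_prod_eq hinv hconj l'
    exact ⟨l'', hnd, hprod'.trans hprod⟩
termination_by l.length

lemma exists_list_prod_eq_of_mem_closure (hinv : ∀ x ∈ X, x * x = 1) {g : G}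
    (hg : g ∈ closure X) : ∃ l : List X, (l.map Subtype.val).prod = g := by
  induction hg using Subgroup.closure_induction with
  | mem x hx => exact ⟨[⟨x, hx⟩], by simp⟩
  | one => exact ⟨[], rfl⟩
  | mul x y _ _ hx hy =>
    obtain ⟨l, rfl⟩ := hx
    obtain ⟨l', rfl⟩ := hy
    exact ⟨l ++ l', by simp⟩
  | inv x _ hx =>
    obtain ⟨l, rfl⟩ := hx
    refine ⟨l.reverse, ?_⟩
    rw [List.prod_inv_reverse, List.map_reverse, List.map_map]
    congr 2
    exact List.map_congr_left fun y _ => (inv_eq_of_mul_eq_one_right (hinv y y.2)).symm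

theorem finite_normalClosure_of_involutions {T : Set G} (hT : ∀ x ∈ T, x * x = 1)
    (hfin : (Group.conjugatesOfSet T).Finite) : (normalClosure T : Set G).Finite := by
  set X := Group.conjugatesOfSet T
  have hinv : ∀ x ∈ X, x * x = 1 := by
    intro x hx
    obtain ⟨a, ha, hax⟩ := Group.mem_conjugatesOfSet_iff.mp hx
    obtain ⟨c, rfl⟩ := isConj_iff.mp hax
    calc c * a * c⁻¹ * (c * a * c⁻¹) = c * (a * a) * c⁻¹ := by group
      _ = 1 := by rw [hT a ha, mul_one, mul_inv_cancel]
  have hconj : ∀ g : G, ∀ x ∈ X, g * x * g⁻¹ ∈ X := fun g x hx =>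
    Group.conj_mem_conjugatesOfSet hx
  have := hfin.fintype
  refine ((List.finite_length_le X (Fintype.card X)).image
    fun l => (l.map Subtype.val).prod).subset fun g hg => ?_
  obtain ⟨l, rfl⟩ := exists_list_prod_eq_of_mem_closure hinv hg
  obtain ⟨l', hnd, hprod⟩ := exists_nodup_prod_eq hinv hconj l
  exact ⟨l', hnd.length_le_card, hprod⟩

end Dietzmann

namespace CoxeterSystem

variable {B W : Type*} [Group W] {M : CoxeterMatrix B} (cs : CoxeterSystem M W)

local prefix:100 "s" => cs.simple
local prefix:100 "π" => cs.wordProd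
local prefix:100 "ris" => cs.rightInvSeq
local prefix:100 "lis" => cs.leftInvSeq

lemma rightInvSeq_cons (i : B) (ω : List B) :
    ris (i :: ω) = (π ω)⁻¹ * s i * π ω :: ris ω := rfl

theorem isConj_simple_of_odd {i j : B} (h : Odd (M i j)) : IsConj (s i) (s j) := by
  obtain ⟨k, hk⟩ := h
  set a := s i * s j
  have ha : a ^ (2 * k + 1) = 1 := hk ▸ cs.simple_mul_simple_pow i j
  have hsc : SemiconjBy (s i) a⁻¹ a := by simp [SemiconjBy, a, mul_assoc]
  have ha2 : a ^ (2 * k) = a⁻¹ := eq_inv_of_mul_eq_one_left (by rwa [← pow_succ])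
  refine isConj_iff.mpr ⟨a ^ k, ?_⟩
  calc a ^ k * s i * (a ^ k)⁻¹ = a ^ k * (s i * a⁻¹ ^ k) := by rw [inv_pow, mul_assoc]
    _ = a ^ (2 * k) * s i := by rw [(hsc.pow_right k).eq, ← mul_assoc, ← pow_add, two_mul]
    _ = s j := by simp [ha2, a, mul_assoc]

lemma wordProd_alternatingWord_two_mul (i j : B) (m : ℕ) :
    π (alternatingWord i j (2 * m)) = (s i * s j) ^ m := by
  simp [prod_alternatingWord_eq_mul_pow]

lemma leftInvSeq_alternatingWord_two_mul (i j : B) (m : ℕ) :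
    lis (alternatingWord j i (2 * m)) =
      (List.range (2 * m)).map fun k => s j * (s i * s j) ^ k := by
  refine List.ext_getElem (by simp) fun k hk _ => ?_
  rw [getElem_leftInvSeq_alternatingWord cs j i m k (by simpa using hk),
    prod_alternatingWord_eq_mul_pow, List.getElem_map, List.getElem_range,
    if_neg (by simp), show (2 * k + 1) / 2 = k by omega]

lemma alternatingWord_two_mul_reverse (i j : B) (m : ℕ) :
    (alternatingWord i j (2 * m)).reverse = alternatingWord j i (2 * m) := by
  refine List.ext_getElem (by simp) fun k hk _ => ?_
  simp only [List.length_reverse, length_alternatingWord] at hk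
  rw [List.getElem_reverse, getElem_alternatingWord _ _ _ _ (by simp; omega),
    getElem_alternatingWord _ _ _ _ hk]
  simp only [length_alternatingWord]
  by_cases hkev : Even k
  · rw [if_neg, if_pos] <;> simp [Nat.even_iff] at hkev ⊢ <;> omega
  · rw [if_pos, if_neg] <;> simp [Nat.even_iff] at hkev ⊢ <;> omega

lemma alternatingWord_two_mul_succ (i j : B) (m : ℕ) :
    alternatingWord i j (2 * (m + 1)) = i :: j :: alternatingWord i j (2 * m) := by
  rw [show 2 * (m + 1) = 2 * m + 1 + 1 by ring, alternatingWord_succ', alternatingWord_succ']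
  simp

lemma simple_mul_mul_simple_eq_simple_iff (i : B) (t : W) : s i * t * s i = s i ↔ t = s i :=
  ⟨fun h => by simpa [mul_assoc] using congrArg (fun x => s i * x * s i) h, by rintro rfl; simp⟩

section SignRepresentation

variable [DecidableEq W]

def signPerm (i : B) : Equiv.Perm (W × ℤˣ) :=
  Function.Involutive.toPerm (fun p => (s i * p.1 * s i, if p.1 = s i then -p.2 else p.2)) <| by
    rintro ⟨t, ε⟩
    simp only [simple_mul_mul_simple_eq_simple_iff, Prod.mk.injEq]
    constructor
    · simp [mul_assoc]
    · split_ifs <;> simp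

lemma signPerm_apply (i : B) (t : W) (ε : ℤˣ) :
    cs.signPerm i (t, ε) = (s i * t * s i, if t = s i then -ε else ε) := rfl

lemma prod_map_signPerm_apply (ω : List B) (t : W) (ε : ℤˣ) :
    (ω.map cs.signPerm).prod (t, ε) =
      (π ω * t * (π ω)⁻¹, ε * (-1) ^ (ris ω).count t) := by
  induction ω generalizing ε with
  | nil => simp
  | cons i ω ih =>
    rw [List.map_cons, List.prod_cons, Equiv.Perm.mul_apply, ih, signPerm_apply,
      rightInvSeq_cons, List.count_cons, wordProd_cons]
    refine Prod.ext (by simp only [mul_inv_rev, inv_simple]; group) ?_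
    by_cases h : π ω * t * (π ω)⁻¹ = s i
    · have h' : (π ω)⁻¹ * s i * π ω = t := by nth_rewrite 1 [← h]; group
      simp [h, h', pow_succ]
    · have h' : (π ω)⁻¹ * s i * π ω ≠ t := by rintro rfl; apply h; group
      simp [h, h']

lemma even_count_rightInvSeq_alternatingWord {i j : B} {m : ℕ}
    (h : (s i * s j) ^ m = 1) (t : W) :
    Even ((ris (alternatingWord i j (2 * m))).count t) := by
  rw [← alternatingWord_two_mul_reverse, rightInvSeq_reverse, List.count_reverse,
    leftInvSeq_alternatingWord_two_mul, two_mul, List.range_add, List.map_append, List.map_map,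
    List.count_append]
  have hper : ((fun k => s j * (s i * s j) ^ k) ∘ fun k => m + k) =
      fun k => s j * (s i * s j) ^ k := by
    ext k
    simp [pow_add, h]
  rw [hper]
  exact ⟨_, rfl⟩

lemma pow_signPerm_mul_signPerm (i j : B) (m : ℕ) :
    (cs.signPerm i * cs.signPerm j) ^ m =
      ((alternatingWord i j (2 * m)).map cs.signPerm).prod := by
  induction m with
  | zero => simp [alternatingWord]
  | succ m ih => rw [pow_succ', ih, alternatingWord_two_mul_succ]; simp [mul_assoc]

lemma isLiftable_signPerm : M.IsLiftable cs.signPerm := by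
  intro i j
  rw [pow_signPerm_mul_signPerm]
  ext ⟨t, ε⟩ : 1
  rw [prod_map_signPerm_apply, wordProd_alternatingWord_two_mul, simple_mul_simple_pow,
    (cs.even_count_rightInvSeq_alternatingWord (cs.simple_mul_simple_pow i j) t).neg_one_pow]
  simp

def signRep : W →* Equiv.Perm (W × ℤˣ) := cs.lift ⟨cs.signPerm, cs.isLiftable_signPerm⟩

lemma signRep_wordProd (ω : List B) : cs.signRep (π ω) = (ω.map cs.signPerm).prod := by
  simp [wordProd, map_list_prod, signRep, List.map_map, Function.comp_def]

def signCocycle (w t : W) : ℤˣ := (cs.signRep w (t, 1)).2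

lemma signCocycle_wordProd (ω : List B) (t : W) :
    cs.signCocycle (π ω) t = (-1) ^ (ris ω).count t := by
  simp [signCocycle, signRep_wordProd, prod_map_signPerm_apply]

lemma signRep_apply (w t : W) (ε : ℤˣ) :
    cs.signRep w (t, ε) = (w * t * w⁻¹, ε * cs.signCocycle w t) := by
  obtain ⟨ω, rfl⟩ := cs.wordProd_surjective w
  simp [signCocycle_wordProd, signRep_wordProd, prod_map_signPerm_apply]

lemma signCocycle_conj_of_mem_center {z : W} (hz : z ∈ center W) (u t : W) :
    cs.signCocycle z (u * t * u⁻¹) = cs.signCocycle z t := by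
  have h := congrArg (fun f => (cs.signRep f (t, 1)).2) (mem_center_iff.mp hz u)
  have hzt : z * t * z⁻¹ = t := by rw [← mem_center_iff.mp hz t]; group
  simp only [map_mul, Equiv.Perm.mul_apply, signRep_apply, one_mul, hzt] at h
  exact mul_left_cancel (h.symm.trans (mul_comm _ _))

end SignRepresentation

theorem conjugatesOf_subset_rightInvSeq {ω : List B} (hω : cs.IsReduced ω)
    (hz : π ω ∈ center W) {t : W} (ht : t ∈ ris ω) :
    conjugatesOf t ⊆ {x | x ∈ ris ω} := by
  classical
  intro x hx
  obtain ⟨c, rfl⟩ := isConj_iff.mp hx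
  have h := cs.signCocycle_conj_of_mem_center hz c t
  rw [signCocycle_wordProd, signCocycle_wordProd,
    List.count_eq_one_of_mem hω.nodup_rightInvSeq ht] at h
  by_contra hx'
  rw [List.count_eq_zero_of_not_mem hx'] at h
  simp at h

section Retraction

variable (S : Set B) (hS : ∀ i j, Odd (M i j) → (i ∈ S ↔ j ∈ S))

include hS in
lemma isLiftable_indicator : M.IsLiftable (S.mulIndicator cs.simple) := by
  intro i j
  have hpow : ∀ k, Even (M i j) → s k ^ M i j = 1 := fun k ⟨n, hn⟩ => by
    rw [hn, ← two_mul, pow_mul, simple_sq, one_pow]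
  by_cases hi : i ∈ S <;> by_cases hj : j ∈ S <;>
    simp only [Set.mulIndicator_of_mem, Set.mulIndicator_of_notMem, hi, hj, not_false_eq_true,
      mul_one, one_mul, one_pow, simple_mul_simple_pow]
  · exact hpow i (Nat.not_odd_iff_even.mp fun h => hj ((hS i j h).mp hi))
  · exact hpow j (Nat.not_odd_iff_even.mp fun h => hi ((hS i j h).mpr hj))

noncomputable def retraction : W →* W := cs.lift ⟨_, cs.isLiftable_indicator S hS⟩

lemma retraction_simple (v : B) : cs.retraction S hS (s v) = S.mulIndicator cs.simple v :=
  cs.lift_apply_simple _ v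

lemma retraction_mem (w : W) : cs.retraction S hS w ∈ closure (cs.simple '' S) := by
  obtain ⟨ω, rfl⟩ := cs.wordProd_surjective w
  unfold wordProd
  rw [map_list_prod]
  refine list_prod_mem ?_
  simp only [List.map_map, List.mem_map, Function.comp_apply, retraction_simple]
  rintro _ ⟨v, -, rfl⟩
  by_cases hv : v ∈ S
  · rw [Set.mulIndicator_of_mem hv]
    exact subset_closure ⟨v, hv, rfl⟩
  · rw [Set.mulIndicator_of_notMem hv]
    exact one_mem _

lemma retraction_eq_self {w : W} (hw : w ∈ closure (cs.simple '' S)) :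
    cs.retraction S hS w = w :=
  MonoidHom.eqOn_closure (g := MonoidHom.id W)
    (by rintro _ ⟨v, hv, rfl⟩; simp [retraction_simple, hv]) hw

lemma surjective_codRestrict_retraction :
    Function.Surjective ((cs.retraction S hS).codRestrict _ (cs.retraction_mem S hS)) :=
  fun ⟨w, hw⟩ => ⟨w, Subtype.ext (cs.retraction_eq_self S hS hw)⟩

end Retraction

def infiniteClassVertices : Set B := {v | (conjugatesOf (s v)).Infinite}

lemma mem_infiniteClassVertices_iff_of_odd (i j : B) (h : Odd (M i j)) :
    i ∈ cs.infiniteClassVertices ↔ j ∈ cs.infiniteClassVertices := by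
  simp only [infiniteClassVertices, Set.mem_ofPred_eq,
    (cs.isConj_simple_of_odd h).conjugatesOf_eq]

theorem center_le_ker_retraction :
    center W ≤ (cs.retraction _ cs.mem_infiniteClassVertices_iff_of_odd).ker := by
  intro z hz
  obtain ⟨ω, hω, rfl⟩ := cs.exists_isReduced z
  have hkill : ∀ t ∈ ris ω, cs.retraction _ cs.mem_infiniteClassVertices_iff_of_odd t = 1 := by
    intro t ht
    obtain ⟨w, v, rfl⟩ := cs.isReflection_of_mem_rightInvSeq ω ht
    have hv : v ∉ cs.infiniteClassVertices := by
      simp only [infiniteClassVertices, Set.mem_ofPred_eq, Set.not_infinite,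
        (isConj_iff.mpr ⟨w, rfl⟩ : IsConj (s v) (w * s v * w⁻¹)).conjugatesOf_eq]
      exact (List.finite_toSet _).subset (cs.conjugatesOf_subset_rightInvSeq hω hz ht)
    simp [retraction_simple, hv]
  rw [MonoidHom.mem_ker, ← inv_eq_one, ← map_inv, ← prod_rightInvSeq, map_list_prod]
  exact List.prod_eq_one (by simpa using hkill)

theorem infinite_closure_simple_infiniteClassVertices [Finite B] [Infinite W] :
    Infinite (closure (cs.simple '' cs.infiniteClassVertices)) := by
  set S := cs.infiniteClassVertices
  set N := normalClosure (cs.simple '' Sᶜ)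
  have hN : (N : Set W).Finite := by
    refine finite_normalClosure_of_involutions (by rintro _ ⟨v, -, rfl⟩; simp) ?_
    rw [Group.conjugatesOfSet, Set.biUnion_image]
    exact Set.Finite.biUnion (Set.toFinite _) fun v hv => Set.not_infinite.mp hv
  have htop : N ⊔ closure (cs.simple '' S) = ⊤ := by
    rw [eq_top_iff, ← cs.subgroup_closure_range_simple, closure_le]
    rintro _ ⟨v, rfl⟩
    by_cases hv : v ∈ S
    · exact mem_sup_right (subset_closure ⟨v, hv, rfl⟩)
    · exact mem_sup_left (subset_normalClosure ⟨v, hv, rfl⟩)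
  by_contra hfin
  have := not_infinite_iff_finite.mp hfin
  have huniv : (Set.univ : Set W) = (N : Set W) * (closure (cs.simple '' S) : Set W) := by
    rw [← normal_mul, htop, coe_top]
  exact Set.infinite_univ (huniv ▸ hN.mul (Set.toFinite _))

end CoxeterSystem

theorem exists_surjective_conj_range_of_center_le_ker {G Q : Type*} [Group G] [Group Q]
    {q : G →* Q} (hq : Function.Surjective q) (hker : center G ≤ q.ker) :
    ∃ φ : (MulAut.conj : G →* MulAut G).range →* Q, Function.Surjective φ := by
  have hle : (MulAut.conj : G →* MulAut G).ker ≤ q.ker := fun x hx =>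
    hker <| mem_center_iff.mpr fun g => by
      have h : x * g * x⁻¹ = g := DFunLike.congr_fun (MonoidHom.mem_ker.mp hx) g
      nth_rewrite 1 [← h]; group
  exact ⟨(QuotientGroup.lift _ q hle).comp
      (QuotientGroup.quotientKerEquivRange _).symm.toMonoidHom,
    (QuotientGroup.lift_surjective_of_surjective _ _ hq hle).comp (MulEquiv.surjective _)⟩

theorem stmt14 {V : Type*} [Fintype V] (M : CoxeterMatrix V)
    (hinf : Infinite M.Group)
    (hout : (MulAut.conj : M.Group →* MulAut M.Group).range.FiniteIndex) :
    ∃ S : Set V, Infinite ↥(M.sp S) ∧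
      VirtuallySurjectsOnto (MulAut M.Group) ↥(M.sp S) := by
  set cs := M.toCoxeterSystem
  set hS := cs.mem_infiniteClassVertices_iff_of_odd
  refine ⟨cs.infiniteClassVertices, cs.infinite_closure_simple_infiniteClassVertices, _, hout,
    exists_surjective_conj_range_of_center_le_ker (cs.surjective_codRestrict_retraction _ hS)
      fun z hz => Subtype.ext (cs.center_le_ker_retraction hz)⟩
end

section
/- Let Γ = (V, E) be a Coxeter graph and suppose v, w ∈ V are two non-adjacent even vertices, and let r : W_Γ → ⟨v⟩ * ⟨w⟩ be the retraction homomorphism with r(v) = v, r(w) = w, r(x) = 1 for x ∈ V \ {v, w}. If f ∈ Aut(W_Γ) maps every subgroup of order 2 of W_Γ to a conjugate of itself, then f(ker r) = ker r. -/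
open Function Subgroup

/-- Hom from `ℤ/2` (multiplicative) determined by an element of square one. -/
def homOfSq {Q : Type*} [Group Q] (q : Q) (hq : q ^ 2 = 1) : Multiplicative (ZMod 2) →* Q where
  toFun a := q ^ (Multiplicative.toAdd a).val
  map_one' := by simp
  map_mul' a b := by
    show q ^ (Multiplicative.toAdd a + Multiplicative.toAdd b).val = _
    rw [ZMod.val_add, ← pow_eq_pow_mod _ hq, pow_add]

@[simp] lemma homOfSq_gen {Q : Type*} [Group Q] (q : Q) (hq : q ^ 2 = 1) :
    homOfSq q hq (Multiplicative.ofAdd (1 : ZMod 2)) = q := by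
  show q ^ ((1 : ZMod 2)).val = q
  rw [ZMod.val_one, pow_one]

theorem stmt15 {V : Type*} [Fintype V] (M : CoxeterMatrix V)
    (v w : V) (hvw : v ≠ w) (hnadj : M v w = 0)
    (hv : M.EvenVertex v) (hw : M.EvenVertex w)
    (r : M.Group →* Z2Z2)
    (hrv : r (M.simple v) = Monoid.Coprod.inl (Multiplicative.ofAdd (1 : ZMod 2)))
    (hrw : r (M.simple w) = Monoid.Coprod.inr (Multiplicative.ofAdd (1 : ZMod 2)))
    (hrx : ∀ x : V, x ≠ v → x ≠ w → r (M.simple x) = 1)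
    (f : MulAut M.Group)
    (hf : ∀ H : Subgroup M.Group, Nat.card H = 2 →
      ∃ g : M.Group, H.map f.toMonoidHom = H.map (MulAut.conj g).toMonoidHom) :
    r.ker.map f.toMonoidHom = r.ker := by
  classical
  have sq : ∀ i : V, M.simple i ^ 2 = 1 := fun i => M.toCoxeterSystem.simple_sq i
  have ne_one : ∀ i : V, M.simple i ≠ 1 := by
    intro i h
    have h1 := M.toCoxeterSystem.length_simple i
    rw [CoxeterMatrix.toCoxeterSystem_simple, h, M.toCoxeterSystem.length_one] at h1
    exact one_ne_zero h1.symm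
  -- the set of simple reflections other than v, w, and its normal closure
  set S : Set M.Group := M.simple '' {x | x ≠ v ∧ x ≠ w} with hS
  set N : Subgroup M.Group := Subgroup.normalClosure S with hN
  have hSker : S ⊆ (r.ker : Set M.Group) := by
    rintro _ ⟨x, ⟨hx1, hx2⟩, rfl⟩
    exact hrx x hx1 hx2
  have hNker : N ≤ r.ker := Subgroup.normalClosure_le_normal hSker
  -- section t : Z2Z2 → M.Group ⧸ N
  let π : M.Group →* M.Group ⧸ N := QuotientGroup.mk' N
  have hqv : (π (M.simple v)) ^ 2 = 1 := by rw [← map_pow, sq, map_one]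
  have hqw : (π (M.simple w)) ^ 2 = 1 := by rw [← map_pow, sq, map_one]
  let t : Z2Z2 →* M.Group ⧸ N := Monoid.Coprod.lift (homOfSq _ hqv) (homOfSq _ hqw)
  have htr : t.comp r = π := by
    apply M.toCoxeterSystem.ext_simple
    intro i
    rw [CoxeterMatrix.toCoxeterSystem_simple]
    by_cases hiv : i = v
    · subst hiv
      rw [MonoidHom.comp_apply, hrv, Monoid.Coprod.lift_apply_inl, homOfSq_gen]
    by_cases hiw : i = w
    · subst hiw
      rw [MonoidHom.comp_apply, hrw, Monoid.Coprod.lift_apply_inr, homOfSq_gen]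
    · rw [MonoidHom.comp_apply, hrx i hiv hiw, map_one]
      have hmem : M.simple i ∈ N := Subgroup.subset_normalClosure ⟨i, ⟨hiv, hiw⟩, rfl⟩
      exact ((QuotientGroup.eq_one_iff _).mpr hmem).symm
  have hkerN : r.ker ≤ N := by
    intro u hu
    have h2 : t (r u) = π u := DFunLike.congr_fun htr u
    rw [MonoidHom.mem_ker.mp hu, map_one] at h2
    exact (QuotientGroup.eq_one_iff u).mp h2.symm
  have hker_eq : r.ker = N := le_antisymm hkerN hNker
  -- key: f and f.symm keep the generating simples inside ker r
  have key : ∀ i : V, i ≠ v → i ≠ w →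
      f (M.simple i) ∈ r.ker ∧ f.symm (M.simple i) ∈ r.ker := by
    intro i hiv hiw
    set s := M.simple i with hs_def
    have hs : s ∈ r.ker := hrx i hiv hiw
    have hcard : Nat.card (Subgroup.zpowers s) = 2 := by
      rw [Nat.card_zpowers]
      exact orderOf_eq_prime (sq i) (ne_one i)
    obtain ⟨g, hg⟩ := hf _ hcard
    have hzle : Subgroup.zpowers s ≤ r.ker := Subgroup.zpowers_le.mpr hs
    constructor
    · have hmem : f s ∈ (Subgroup.zpowers s).map (MulAut.conj g).toMonoidHom := by
        rw [← hg]; exact ⟨s, Subgroup.mem_zpowers s, rfl⟩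
      obtain ⟨u, hu, huu⟩ := hmem
      rw [← huu]
      show g * u * g⁻¹ ∈ r.ker
      exact Subgroup.Normal.conj_mem inferInstance _ (hzle hu) g
    · have hmem : (MulAut.conj g).toMonoidHom s ∈ (Subgroup.zpowers s).map f.toMonoidHom := by
        rw [hg]; exact ⟨s, Subgroup.mem_zpowers s, rfl⟩
      obtain ⟨u, hu, huu⟩ := hmem
      have hu' : u ∈ r.ker := hzle hu
      have h1 : f.symm (g * s * g⁻¹) = u := by
        rw [show g * s * g⁻¹ = (MulAut.conj g).toMonoidHom s from rfl, ← huu]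
        exact f.symm_apply_apply u
      have h2 : f.symm g * f.symm s * (f.symm g)⁻¹ = u := by
        simpa [map_mul] using h1
      have h3 : f.symm s = (f.symm g)⁻¹ * u * ((f.symm g)⁻¹)⁻¹ := by
        rw [← h2]; group
      rw [h3]
      exact Subgroup.Normal.conj_mem inferInstance _ hu' _
  -- any automorphism keeping the generators in ker r maps ker r into ker r
  have himg : ∀ (φ : M.Group ≃* M.Group), (∀ i : V, i ≠ v → i ≠ w → φ (M.simple i) ∈ r.ker) →
      r.ker.map φ.toMonoidHom ≤ r.ker := by
    intro φ hφ
    rw [hker_eq, hN, Subgroup.map_normalClosure _ _ φ.surjective]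
    apply Subgroup.normalClosure_le_normal
    rintro _ ⟨_, ⟨x, ⟨hx1, hx2⟩, rfl⟩, rfl⟩
    exact hkerN (hφ x hx1 hx2)
  have h1 : r.ker.map f.toMonoidHom ≤ r.ker := by
    rw [hker_eq]; rw [hker_eq] at himg
    exact himg f (fun i a b => hker_eq ▸ (key i a b).1)
  have h2 : r.ker.map f.symm.toMonoidHom ≤ r.ker := by
    rw [hker_eq]; rw [hker_eq] at himg
    exact himg f.symm (fun i a b => hker_eq ▸ (key i a b).2)
  refine le_antisymm h1 ?_
  intro u hu
  have hsu : f.symm u ∈ r.ker := h2 ⟨u, hu, rfl⟩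
  exact ⟨f.symm u, hsu, f.apply_symm_apply u⟩
end
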